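/- Under the perturbed preconditioned Cholesky-QR model, if κ(A₁)²γ₂ < 1 where γ₂ ≡ 2ε_F + ε_F² + (1+ε_F)²(ε₁ + (1+ε₁)ε₂) and ε_F ≡ (ε_A + ε_s)κ(R_s), then Ĝ₁ + E₂ is symmetric positive definite. -/

import Mathlib

/-!
Write `Â₁ = A₁ + D`. The relative error bounds give `‖D‖ ≤ ε_F ‖A₁‖`, and expanding
`Ĝ₁ + E₂ - A₁ᵀA₁ = A₁ᵀD + DᵀA₁ + DᵀD + E₁ + E₂` bounds its norm by `γ₂ ‖A₁‖²`. As
`‖A₁‖ = κ(A₁) σₙ(A₁)` and `A₁ᵀA₁ ≥ σₙ(A₁)² I`, the hypothesis makes this perturbation smaller than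
`σₙ(A₁)²`, so (Weyl) `Ĝ₁ + E₂` stays positive definite. The hypothesis also forces `ε_F, ε₁ < 1`,
which excludes `Â₁ = 0` and `Ĝ₁ = 0`, where `ε₁` and `ε₂` would be the junk quotients `x / 0 = 0`.
-/

open Matrix

/-- Spectral (two-)norm of a real matrix. -/
noncomputable def spec {m n : ℕ} (M : Matrix (Fin m) (Fin n) ℝ) : ℝ :=
  ‖LinearMap.toContinuousLinearMap (Matrix.toEuclideanLin M)‖

/-- Singular values of a real `m × n` matrix, in decreasing order:
`singularValues M i` is `σ_{i+1}(M)` (0-based). -/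
noncomputable def singularValues {m n : ℕ} (M : Matrix (Fin m) (Fin n) ℝ) : Fin n → ℝ :=
  fun i =>
    Real.sqrt (((Matrix.conjTranspose_eq_transpose_of_trivial M ▸ Matrix.isHermitian_conjTranspose_mul_self M : (Mᵀ * M).IsHermitian).eigenvalues ∘
      ⇑(Tuple.sort (Matrix.conjTranspose_eq_transpose_of_trivial M ▸ Matrix.isHermitian_conjTranspose_mul_self M : (Mᵀ * M).IsHermitian).eigenvalues)) i.rev)

/-- Two-norm condition number `κ(M) = σ₁(M)/σₙ(M)`. -/
noncomputable def kappa {m n : ℕ} (M : Matrix (Fin m) (Fin n) ℝ) : ℝ :=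
  if h : 0 < n then
    singularValues M ⟨0, h⟩ / singularValues M ⟨n - 1, Nat.sub_lt h Nat.one_pos⟩
  else 1

/-- Smallest singular value `σₙ(M)`. -/
noncomputable def sigmaMin {m n : ℕ} (M : Matrix (Fin m) (Fin n) ℝ) : ℝ :=
  if h : 0 < n then singularValues M ⟨n - 1, Nat.sub_lt h Nat.one_pos⟩ else 1

/-- Eigenvalues of a real symmetric matrix in decreasing order:
`symmEigs M j` is `λ_{j+1}(M)` (0-based). -/
noncomputable def symmEigs {n : ℕ} (M : Matrix (Fin n) (Fin n) ℝ) : Fin n → ℝ :=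
  fun j =>
    if h : M.IsHermitian then (h.eigenvalues ∘ ⇑(Tuple.sort h.eigenvalues)) j.rev else 0

open scoped Matrix.Norms.L2Operator MatrixOrder ComplexOrder

theorem spec_eq_l2_opNorm {m n : ℕ} (M : Matrix (Fin m) (Fin n) ℝ) : spec M = ‖M‖ := rfl

namespace Matrix

variable {𝕜 : Type*} [RCLike 𝕜] {n : Type*} [Fintype n] [DecidableEq n]

theorem IsHermitian.l2_opNorm_eq_norm_eigenvalues {H : Matrix n n 𝕜} (hH : H.IsHermitian) :
    ‖H‖ = ‖hH.eigenvalues‖ := by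
  conv_lhs => rw [hH.spectral_theorem]
  rw [Unitary.conjStarAlgAut_apply, ← Unitary.coe_star, CStarRing.norm_mul_coe_unitary,
    CStarRing.norm_coe_unitary_mul, l2_opNorm_diagonal]
  simp [Pi.norm_def]

theorem IsHermitian.neg_algebraMap_norm_le {H : Matrix n n 𝕜} (hH : H.IsHermitian) :
    -algebraMap ℝ _ ‖H‖ ≤ H := by
  rw [← map_neg, algebraMap_le_iff_le_spectrum hH.isSelfAdjoint,
    hH.spectrum_real_eq_range_eigenvalues]
  rintro _ ⟨i, rfl⟩
  rw [hH.l2_opNorm_eq_norm_eigenvalues, neg_le]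
  exact (neg_le_abs _).trans (norm_le_pi_norm hH.eigenvalues i)

theorem posDef_add_of_norm_lt {H Δ : Matrix n n 𝕜} {c : ℝ} (hH : algebraMap ℝ _ c ≤ H)
    (hΔ : Δ.IsHermitian) (hlt : ‖Δ‖ < c) : (H + Δ).PosDef := by
  have hle : algebraMap ℝ _ (c - ‖Δ‖) ≤ H + Δ := by
    rw [map_sub, sub_eq_add_neg]
    exact add_le_add hH hΔ.neg_algebraMap_norm_le
  have hpos : (algebraMap ℝ (Matrix n n 𝕜) (c - ‖Δ‖)).PosDef := by
    rw [Algebra.algebraMap_eq_smul_one]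
    exact PosDef.one.smul (sub_pos.2 hlt)
  simpa using hpos.add_posSemidef (le_iff.mp hle)

end Matrix

section Transpose

variable {m n : Type*} [Fintype m] [Fintype n] [DecidableEq n]

theorem Matrix.l2_opNorm_transpose [DecidableEq m] (M : Matrix m n ℝ) : ‖Mᵀ‖ = ‖M‖ :=
  M.l2_opNorm_conjTranspose

theorem Matrix.l2_opNorm_transpose_mul_self (M : Matrix m n ℝ) : ‖Mᵀ * M‖ = ‖M‖ * ‖M‖ :=
  M.l2_opNorm_conjTranspose_mul_self

theorem Matrix.l2_opNorm_transpose_mul_self_sub_le [DecidableEq m] (A D : Matrix m n ℝ) :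
    ‖(A + D)ᵀ * (A + D) - Aᵀ * A‖ ≤ 2 * ‖A‖ * ‖D‖ + ‖D‖ ^ 2 := by
  have hsplit : (A + D)ᵀ * (A + D) - Aᵀ * A = Aᵀ * D + Dᵀ * A + Dᵀ * D := by
    simp only [transpose_add, Matrix.add_mul, Matrix.mul_add]; abel
  rw [hsplit]
  calc ‖Aᵀ * D + Dᵀ * A + Dᵀ * D‖ ≤ ‖Aᵀ‖ * ‖D‖ + ‖Dᵀ‖ * ‖A‖ + ‖Dᵀ‖ * ‖D‖ :=
        (norm_add₃_le ..).trans (add_le_add_three (l2_opNorm_mul ..) (l2_opNorm_mul ..)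
          (l2_opNorm_mul ..))
    _ = 2 * ‖A‖ * ‖D‖ + ‖D‖ ^ 2 := by
        rw [l2_opNorm_transpose, l2_opNorm_transpose]; ring

end Transpose

section SingularValues

variable {m n : ℕ} (M : Matrix (Fin m) (Fin n) ℝ)

theorem Matrix.isHermitian_transpose_mul_self : (Mᵀ * M).IsHermitian :=
  isHermitian_conjTranspose_mul_self M

theorem eigenvalues_transpose_mul_self_nonneg (j : Fin n) :
    0 ≤ (isHermitian_transpose_mul_self M).eigenvalues j :=
  eigenvalues_conjTranspose_mul_self_nonneg M j

theorem singularValues_antitone : Antitone (singularValues M) := fun _ _ hij =>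
  Real.sqrt_le_sqrt (Tuple.monotone_sort _ (Fin.rev_le_rev.mpr hij))

theorem exists_sq_singularValues_eq (j : Fin n) :
    ∃ i, singularValues M i ^ 2 = (isHermitian_transpose_mul_self M).eigenvalues j :=
  ⟨((Tuple.sort (isHermitian_transpose_mul_self M).eigenvalues).symm j).rev, by
    simpa [singularValues] using Real.sq_sqrt (eigenvalues_transpose_mul_self_nonneg M j)⟩

theorem sq_sigmaMin_le_eigenvalues (j : Fin n) :
    sigmaMin M ^ 2 ≤ (isHermitian_transpose_mul_self M).eigenvalues j := by
  obtain ⟨i, hi⟩ := exists_sq_singularValues_eq M j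
  rw [sigmaMin, dif_pos j.pos, ← hi]
  exact pow_le_pow_left₀ (Real.sqrt_nonneg _)
    (singularValues_antitone M (Fin.mk_le_mk.mpr (Nat.le_sub_one_of_lt i.2))) 2

theorem eigenvalues_le_sq_singularValues (hn : 0 < n) (j : Fin n) :
    (isHermitian_transpose_mul_self M).eigenvalues j ≤ singularValues M ⟨0, hn⟩ ^ 2 := by
  obtain ⟨i, hi⟩ := exists_sq_singularValues_eq M j
  rw [← hi]
  exact pow_le_pow_left₀ (Real.sqrt_nonneg _)
    (singularValues_antitone M (Fin.mk_le_mk.mpr (Nat.zero_le _))) 2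

theorem algebraMap_sq_sigmaMin_le : algebraMap ℝ _ (sigmaMin M ^ 2) ≤ Mᵀ * M := by
  rw [algebraMap_le_iff_le_spectrum (isHermitian_transpose_mul_self M).isSelfAdjoint,
    (isHermitian_transpose_mul_self M).spectrum_real_eq_range_eigenvalues]
  rintro _ ⟨j, rfl⟩
  exact sq_sigmaMin_le_eigenvalues M j

theorem l2_opNorm_le_singularValues (hn : 0 < n) : ‖M‖ ≤ singularValues M ⟨0, hn⟩ := by
  have hsq : ‖M‖ ^ 2 ≤ singularValues M ⟨0, hn⟩ ^ 2 := by
    rw [sq, ← Matrix.l2_opNorm_transpose_mul_self,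
      (isHermitian_transpose_mul_self M).l2_opNorm_eq_norm_eigenvalues]
    refine (pi_norm_le_iff_of_nonneg (sq_nonneg _)).mpr fun j => ?_
    rw [Real.norm_of_nonneg (eigenvalues_transpose_mul_self_nonneg M j)]
    exact eigenvalues_le_sq_singularValues M hn j
  exact (pow_le_pow_iff_left₀ (norm_nonneg _) (Real.sqrt_nonneg _) two_ne_zero).mp hsq

theorem eigenvalues_transpose_mul_self_pos_of_rank_eq (hM : M.rank = n) (j : Fin n) :
    0 < (isHermitian_transpose_mul_self M).eigenvalues j := by
  refine (eigenvalues_transpose_mul_self_nonneg M j).lt_of_ne' fun hj => ?_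
  have hcard := (isHermitian_transpose_mul_self M).rank_eq_card_non_zero_eigs
  rw [rank_transpose_mul_self, hM] at hcard
  have hlt := Fintype.card_subtype_lt (p := fun i => _ ≠ 0) (not_not.mpr hj)
  rw [← hcard, Fintype.card_fin] at hlt
  exact hlt.false

theorem sigmaMin_pos_of_rank_eq (hM : M.rank = n) : 0 < sigmaMin M := by
  unfold sigmaMin
  split_ifs
  · exact Real.sqrt_pos.mpr (eigenvalues_transpose_mul_self_pos_of_rank_eq M hM _)
  · exact one_pos

theorem kappa_mul_sigmaMin (hM : M.rank = n) (hn : 0 < n) :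
    kappa M * sigmaMin M = singularValues M ⟨0, hn⟩ := by
  have hpos := sigmaMin_pos_of_rank_eq M hM
  rw [sigmaMin, dif_pos hn] at hpos ⊢
  rw [kappa, dif_pos hn, div_mul_cancel₀ _ hpos.ne']

theorem one_le_kappa (hM : M.rank = n) (hn : 0 < n) : 1 ≤ kappa M := by
  have hle : sigmaMin M ≤ singularValues M ⟨0, hn⟩ := by
    rw [sigmaMin, dif_pos hn]
    exact singularValues_antitone M (Fin.mk_le_mk.mpr (Nat.zero_le _))
  rw [← kappa_mul_sigmaMin M hM hn] at hle
  exact le_of_mul_le_mul_right (by simpa using hle) (sigmaMin_pos_of_rank_eq M hM)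

end SingularValues

section Perturbation

variable {m n : ℕ}

def gamma2 (εF ε₁ ε₂ : ℝ) : ℝ := 2 * εF + εF ^ 2 + (1 + εF) ^ 2 * (ε₁ + (1 + ε₁) * ε₂)

theorem lt_one_of_gamma2_lt_one {εF ε₁ ε₂ : ℝ} (hεF : 0 ≤ εF) (hε₁ : 0 ≤ ε₁) (hε₂ : 0 ≤ ε₂)
    (hγ : gamma2 εF ε₁ ε₂ < 1) : εF < 1 ∧ ε₁ < 1 := by
  unfold gamma2 at hγ
  have h₂ : 0 ≤ (1 + ε₁) * ε₂ := by positivity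
  constructor <;> nlinarith [mul_nonneg (sq_nonneg εF) hε₁, mul_nonneg hεF hε₁,
    mul_nonneg (sq_nonneg (1 + εF)) h₂]

theorem l2_opNorm_preconditioned_sub_le {A E Es : Matrix (Fin m) (Fin n) ℝ}
    {Rs : Matrix (Fin n) (Fin n) ℝ} (hRs : IsUnit Rs.det) (hA : A ≠ 0) :
    ‖(A + E + Es) * Rs⁻¹ - A * Rs⁻¹‖ ≤
      (‖E‖ / ‖A‖ + ‖Es‖ / (‖A * Rs⁻¹‖ * ‖Rs‖)) * (‖Rs‖ * ‖Rs⁻¹‖) * ‖A * Rs⁻¹‖ := by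
  set A₁ := A * Rs⁻¹ with hA₁
  have hA_le : ‖A‖ ≤ ‖A₁‖ * ‖Rs‖ := by
    calc ‖A‖ = ‖A₁ * Rs‖ := by rw [hA₁, Matrix.mul_assoc, nonsing_inv_mul _ hRs, Matrix.mul_one]
      _ ≤ ‖A₁‖ * ‖Rs‖ := l2_opNorm_mul _ _
  have hApos : 0 < ‖A‖ := norm_pos_iff.mpr hA
  have hE : ‖E‖ ≤ ‖E‖ / ‖A‖ * (‖A₁‖ * ‖Rs‖) :=
    calc ‖E‖ = ‖E‖ / ‖A‖ * ‖A‖ := (div_mul_cancel₀ _ hApos.ne').symm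
      _ ≤ ‖E‖ / ‖A‖ * (‖A₁‖ * ‖Rs‖) := by gcongr
  have hEs : ‖Es‖ = ‖Es‖ / (‖A₁‖ * ‖Rs‖) * (‖A₁‖ * ‖Rs‖) :=
    (div_mul_cancel₀ _ (hApos.trans_le hA_le).ne').symm
  calc ‖(A + E + Es) * Rs⁻¹ - A₁‖ = ‖(E + Es) * Rs⁻¹‖ := by
        rw [hA₁, ← Matrix.sub_mul]; congr 2; abel
    _ ≤ (‖E‖ + ‖Es‖) * ‖Rs⁻¹‖ := (l2_opNorm_mul _ _).trans (by gcongr; exact norm_add_le _ _)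
    _ ≤ (‖E‖ / ‖A‖ * (‖A₁‖ * ‖Rs‖) + ‖Es‖ / (‖A₁‖ * ‖Rs‖) * (‖A₁‖ * ‖Rs‖)) * ‖Rs⁻¹‖ := by
        gcongr; linarith
    _ = (‖E‖ / ‖A‖ + ‖Es‖ / (‖A₁‖ * ‖Rs‖)) * (‖Rs‖ * ‖Rs⁻¹‖) * ‖A₁‖ := by ring

theorem l2_opNorm_gram_error_le {A₁ Â : Matrix (Fin m) (Fin n) ℝ}
    {E₁ E₂ : Matrix (Fin n) (Fin n) ℝ} {εF ε₁ ε₂ : ℝ} (hε₁ : 0 ≤ ε₁) (hε₂ : 0 ≤ ε₂)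
    (hD : ‖Â - A₁‖ ≤ εF * ‖A₁‖) (hE₁ : ‖E₁‖ ≤ ε₁ * ‖Â‖ ^ 2)
    (hE₂ : ‖E₂‖ ≤ ε₂ * ‖Âᵀ * Â + E₁‖) :
    ‖Âᵀ * Â + E₁ + E₂ - A₁ᵀ * A₁‖ ≤ gamma2 εF ε₁ ε₂ * ‖A₁‖ ^ 2 := by
  have hÂ : ‖Â‖ ≤ (1 + εF) * ‖A₁‖ := by
    linarith [norm_le_norm_add_norm_sub' Â A₁]
  have hG : ‖Âᵀ * Â + E₁‖ ≤ (1 + ε₁) * ((1 + εF) * ‖A₁‖) ^ 2 :=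
    calc ‖Âᵀ * Â + E₁‖ ≤ ‖Âᵀ * Â‖ + ‖E₁‖ := norm_add_le _ _
      _ ≤ (1 + ε₁) * ‖Â‖ ^ 2 := by rw [l2_opNorm_transpose_mul_self]; linarith
      _ ≤ (1 + ε₁) * ((1 + εF) * ‖A₁‖) ^ 2 := by gcongr
  have hgram : ‖Âᵀ * Â - A₁ᵀ * A₁‖ ≤ (2 * εF + εF ^ 2) * ‖A₁‖ ^ 2 :=
    calc ‖Âᵀ * Â - A₁ᵀ * A₁‖ ≤ 2 * ‖A₁‖ * ‖Â - A₁‖ + ‖Â - A₁‖ ^ 2 := by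
          simpa using l2_opNorm_transpose_mul_self_sub_le A₁ (Â - A₁)
      _ ≤ 2 * ‖A₁‖ * (εF * ‖A₁‖) + (εF * ‖A₁‖) ^ 2 := by gcongr
      _ = (2 * εF + εF ^ 2) * ‖A₁‖ ^ 2 := by ring
  calc ‖Âᵀ * Â + E₁ + E₂ - A₁ᵀ * A₁‖ = ‖(Âᵀ * Â - A₁ᵀ * A₁) + E₁ + E₂‖ := by congr 1; abel
    _ ≤ ‖Âᵀ * Â - A₁ᵀ * A₁‖ + ‖E₁‖ + ‖E₂‖ := norm_add₃_le
    _ ≤ (2 * εF + εF ^ 2) * ‖A₁‖ ^ 2 + ε₁ * ((1 + εF) * ‖A₁‖) ^ 2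
          + ε₂ * ((1 + ε₁) * ((1 + εF) * ‖A₁‖) ^ 2) := by
        gcongr
        · exact hE₁.trans (by gcongr)
        · exact hE₂.trans (by gcongr)
    _ = gamma2 εF ε₁ ε₂ * ‖A₁‖ ^ 2 := by unfold gamma2; ring

theorem l2_opNorm_gram_error_le_of_gamma2_lt_one {A₁ Â : Matrix (Fin m) (Fin n) ℝ}
    {E₁ E₂ : Matrix (Fin n) (Fin n) ℝ} {εF : ℝ} (hεF : 0 ≤ εF) (hA₁ : A₁ ≠ 0)
    (hD : ‖Â - A₁‖ ≤ εF * ‖A₁‖)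
    (hγ : gamma2 εF (‖E₁‖ / ‖Â‖ ^ 2) (‖E₂‖ / ‖Âᵀ * Â + E₁‖) < 1) :
    ‖Âᵀ * Â + E₁ + E₂ - A₁ᵀ * A₁‖ ≤
      gamma2 εF (‖E₁‖ / ‖Â‖ ^ 2) (‖E₂‖ / ‖Âᵀ * Â + E₁‖) * ‖A₁‖ ^ 2 := by
  set ε₁ := ‖E₁‖ / ‖Â‖ ^ 2
  set ε₂ := ‖E₂‖ / ‖Âᵀ * Â + E₁‖
  have hε₁ : 0 ≤ ε₁ := by positivity
  have hε₂ : 0 ≤ ε₂ := by positivity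
  obtain ⟨hεF_lt, hε₁_lt⟩ := lt_one_of_gamma2_lt_one hεF hε₁ hε₂ hγ
  have hÂ : 0 < ‖Â‖ := by
    have := norm_pos_iff.mpr hA₁
    nlinarith [norm_le_norm_add_norm_sub' A₁ Â, norm_sub_rev A₁ Â]
  have hE₁ : ‖E₁‖ = ε₁ * ‖Â‖ ^ 2 := (div_mul_cancel₀ _ (by positivity)).symm
  have hG : 0 < ‖Âᵀ * Â + E₁‖ := by
    have := norm_le_norm_add_norm_sub' (Âᵀ * Â) (-E₁)
    rw [sub_neg_eq_add, norm_neg, l2_opNorm_transpose_mul_self, ← sq] at this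
    nlinarith [pow_pos hÂ 2]
  exact l2_opNorm_gram_error_le hε₁ hε₂ hD hE₁.le (div_mul_cancel₀ _ hG.ne').ge

end Perturbation

/-- Theorem 3.2, positive definiteness: if `κ(A₁)²γ₂ < 1` then
`Ĝ₁ + E₂` is symmetric positive definite. -/
theorem stmt_11 {m n : ℕ} (A E Es : Matrix (Fin m) (Fin n) ℝ)
    (Rs : Matrix (Fin n) (Fin n) ℝ)
    (hA : A.rank = n) (hRs : IsUnit Rs.det)
    (A₁ Ahat : Matrix (Fin m) (Fin n) ℝ)
    (hA₁ : A₁ = A * Rs⁻¹)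
    (hAhat : Ahat = ((A + E) + Es) * Rs⁻¹)
    (E₁ E₂ Ghat : Matrix (Fin n) (Fin n) ℝ)
    (hE₁ : E₁ᵀ = E₁) (hE₂ : E₂ᵀ = E₂)
    (hGhat : Ghat = Ahatᵀ * Ahat + E₁)
    (εA εs εF ε₁ ε₂ γ₂ : ℝ)
    (hεA : εA = spec E / spec A)
    (hεs : εs = spec Es / (spec A₁ * spec Rs))
    (hεF : εF = (εA + εs) * (spec Rs * spec Rs⁻¹))
    (hε₁ : ε₁ = spec E₁ / spec Ahat ^ 2)
    (hε₂ : ε₂ = spec E₂ / spec Ghat)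
    (hγ₂ : γ₂ = 2 * εF + εF ^ 2 + (1 + εF) ^ 2 * (ε₁ + (1 + ε₁) * ε₂))
    (hsmall : kappa A₁ ^ 2 * γ₂ < 1) :
    (Ghat + E₂).PosDef := by
  obtain rfl | hn := n.eq_zero_or_pos
  · exact ⟨by ext i; exact i.elim0, fun x hx => (hx (Subsingleton.elim x 0)).elim⟩
  simp only [spec_eq_l2_opNorm] at hεA hεs hεF hε₁ hε₂
  have hne : ∀ {M : Matrix (Fin m) (Fin n) ℝ}, M.rank = n → M ≠ 0 := by
    rintro M hM rfl; rw [rank_zero] at hM; omega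
  have hrank : A₁.rank = n := by
    rw [hA₁, rank_mul_eq_left_of_isUnit_det _ _ (isUnit_nonsing_inv_det _ hRs), hA]
  have hD : ‖Ahat - A₁‖ ≤ εF * ‖A₁‖ := by
    rw [hεF, hεA, hεs, hAhat, hA₁]; exact l2_opNorm_preconditioned_sub_le hRs (hne hA)
  have hγ₀ : 0 ≤ γ₂ := by rw [hγ₂, hεF, hεA, hεs, hε₁, hε₂]; positivity
  have hγ : gamma2 εF ε₁ ε₂ < 1 := by
    rw [gamma2, ← hγ₂]; nlinarith [one_le_kappa A₁ hrank hn]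
  rw [hε₁, hε₂, hGhat] at hγ
  have hΔ := l2_opNorm_gram_error_le_of_gamma2_lt_one (by rw [hεF, hεA, hεs]; positivity)
    (hne hrank) hD hγ
  rw [← hGhat, ← hε₁, ← hε₂, gamma2, ← hγ₂] at hΔ
  have hlt : ‖Ghat + E₂ - A₁ᵀ * A₁‖ < sigmaMin A₁ ^ 2 :=
    calc ‖Ghat + E₂ - A₁ᵀ * A₁‖ ≤ γ₂ * ‖A₁‖ ^ 2 := hΔ
      _ ≤ γ₂ * (kappa A₁ * sigmaMin A₁) ^ 2 := by
          rw [kappa_mul_sigmaMin A₁ hrank hn]; gcongr; exact l2_opNorm_le_singularValues A₁ hn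
      _ = kappa A₁ ^ 2 * γ₂ * sigmaMin A₁ ^ 2 := by ring
      _ < sigmaMin A₁ ^ 2 :=
          mul_lt_of_lt_one_left (pow_pos (sigmaMin_pos_of_rank_eq A₁ hrank) 2) hsmall
  have hsymm : (Ghat + E₂ - A₁ᵀ * A₁).IsHermitian := by
    rw [IsHermitian, conjTranspose_eq_transpose_of_trivial]
    simp [hGhat, hE₁, hE₂]
  simpa using posDef_add_of_norm_lt (algebraMap_sq_sigmaMin_le A₁) hsymm hlt
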